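/- The double integral over (0,1]² of min((1−a)/b, (1−b)/a) da db equals 2 log 2. -/

import Mathlib

/-!
For fixed `a ∈ (0, 1)` the minimum is `(1 - a) / b` exactly when `b (1 - b) ≥ a (1 - a)`, i.e.
when `b` lies between `c = min a (1 - a)` and `d = max a (1 - a)`. Integrating the two branches
over `(0, c)`, `(c, d)`, `(d, 1)` gives the inner integral `c / a + (1 - a) log (d / c)`. Folding
`[1/2, 1]` onto `[0, 1/2]` by `a ↦ 1 - a`, the two halves add up to
`1 / (1 - a) + log (1 - a) - log a`, whose integral over `[0, 1/2]` is `2 log 2`.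
-/

open MeasureTheory Real Set intervalIntegral

section MinKernel

variable {a b : ℝ}

lemma min_one_sub_div_eq_left (ha : 0 < a) (hb : 0 < b) (h : a * (1 - a) ≤ b * (1 - b)) :
    min ((1 - a) / b) ((1 - b) / a) = (1 - a) / b :=
  min_eq_left <| (div_le_div_iff₀ hb ha).2 (by linarith)

lemma min_one_sub_div_eq_right (ha : 0 < a) (hb : 0 < b) (h : b * (1 - b) ≤ a * (1 - a)) :
    min ((1 - a) / b) ((1 - b) / a) = (1 - b) / a :=
  min_eq_right <| (div_le_div_iff₀ ha hb).2 (by linarith)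

end MinKernel

lemma integral_one_sub_div (a u v : ℝ) :
    ∫ x in u..v, (1 - x) / a = ((v - v ^ 2 / 2) - (u - u ^ 2 / 2)) / a := by
  rw [intervalIntegral.integral_div, integral_sub intervalIntegrable_const intervalIntegrable_id,
    intervalIntegral.integral_const, integral_id, smul_eq_mul]
  ring

lemma integral_const_div_of_pos (c : ℝ) {u v : ℝ} (hu : 0 < u) (hv : 0 < v) :
    ∫ x in u..v, c / x = c * log (v / u) := by
  simp only [div_eq_mul_inv c, intervalIntegral.integral_const_mul, integral_inv_of_pos hu hv]

noncomputable def innerIntegral (a : ℝ) : ℝ :=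
  min a (1 - a) / a + (1 - a) * log (max a (1 - a) / min a (1 - a))

theorem integral_min_one_sub_div {a : ℝ} (ha : a ∈ Ioo 0 1) :
    ∫ b in (0:ℝ)..1, min ((1 - a) / b) ((1 - b) / a) = innerIntegral a := by
  obtain ⟨ha₀, ha₁⟩ := ha
  rw [innerIntegral]
  set c := min a (1 - a)
  set d := max a (1 - a)
  have hc : 0 < c := lt_min ha₀ (by linarith)
  have hcd : c ≤ d := min_le_max
  have hd : d ≤ 1 := max_le ha₁.le (by linarith)
  have hsum : c + d = 1 := by rw [min_add_max]; ring
  have hprod : c * d = a * (1 - a) := min_mul_max a (1 - a)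
  have hfactor : ∀ b, b * (1 - b) - a * (1 - a) = (b - c) * (d - b) := fun b => by
    linear_combination (-b) * hsum + hprod
  set f := fun b : ℝ => min ((1 - a) / b) ((1 - b) / a)
  have h₁ : EqOn (fun b => (1 - b) / a) f (Ioo 0 c) := fun b hb =>
    (min_one_sub_div_eq_right ha₀ hb.1 (by nlinarith [hfactor b, hb.2])).symm
  have h₂ : EqOn (fun b => (1 - a) / b) f (Ioo c d) := fun b hb =>
    (min_one_sub_div_eq_left ha₀ (hc.trans hb.1) (by nlinarith [hfactor b, hb.1, hb.2])).symm
  have h₃ : EqOn (fun b => (1 - b) / a) f (Ioo d 1) := fun b hb =>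
    (min_one_sub_div_eq_right ha₀ (by linarith [hb.1]) (by nlinarith [hfactor b, hb.1])).symm
  have hlin : ∀ u v, IntervalIntegrable (fun b => (1 - b) / a) volume u v := fun u v =>
    ((continuous_const.sub continuous_id).div_const a).intervalIntegrable u v
  have i₁ : IntervalIntegrable f volume 0 c := (hlin 0 c).congr_uIoo (by rwa [uIoo_of_le hc.le])
  have i₂ : IntervalIntegrable f volume c d := by
    refine ContinuousOn.intervalIntegrable (continuousOn_const.div continuousOn_id ?_)
      |>.congr_uIoo (by rwa [uIoo_of_le hcd])
    intro x hx
    rw [uIcc_of_le hcd] at hx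
    exact (hc.trans_le hx.1).ne'
  have i₃ : IntervalIntegrable f volume d 1 := (hlin d 1).congr_uIoo (by rwa [uIoo_of_le hd])
  rw [← integral_add_adjacent_intervals i₁ (i₂.trans i₃),
    ← integral_add_adjacent_intervals i₂ i₃, ← integral_congr_Ioo_of_le hc.le h₁,
    ← integral_congr_Ioo_of_le hcd h₂, ← integral_congr_Ioo_of_le hd h₃,
    integral_one_sub_div, integral_one_sub_div, integral_const_div_of_pos _ hc (hc.trans_le hcd)]
  linear_combination (d - 1 - c) / (2 * a) * hsum

section Folding

variable {a : ℝ}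

lemma innerIntegral_of_le_half (ha₀ : 0 < a) (ha : a ≤ 1 / 2) :
    innerIntegral a = 1 + (1 - a) * (log (1 - a) - log a) := by
  have ha' : a ≤ 1 - a := by linarith
  rw [innerIntegral, min_eq_left ha', max_eq_right ha', div_self ha₀.ne',
    log_div (by linarith) ha₀.ne']

lemma innerIntegral_one_sub_of_le_half (ha₀ : 0 < a) (ha : a ≤ 1 / 2) :
    innerIntegral (1 - a) = a / (1 - a) + a * (log (1 - a) - log a) := by
  have ha' : a ≤ 1 - a := by linarith
  rw [innerIntegral, sub_sub_cancel, min_eq_right ha', max_eq_left ha',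
    log_div (by linarith) ha₀.ne']

lemma innerIntegral_add_innerIntegral_one_sub (ha₀ : 0 < a) (ha : a ≤ 1 / 2) :
    innerIntegral a + innerIntegral (1 - a) = 1 / (1 - a) + (log (1 - a) - log a) := by
  have : 1 - a ≠ 0 := by linarith
  rw [innerIntegral_of_le_half ha₀ ha, innerIntegral_one_sub_of_le_half ha₀ ha]
  field_simp
  ring

end Folding

lemma intervalIntegrable_log_one_sub (u v : ℝ) :
    IntervalIntegrable (fun x => log (1 - x)) volume u v := by
  simpa only [sub_sub_cancel] using
    (intervalIntegrable_log' (a := 1 - u) (b := 1 - v)).comp_sub_left 1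

lemma intervalIntegrable_log_one_sub_sub_log (u v : ℝ) :
    IntervalIntegrable (fun x => log (1 - x) - log x) volume u v :=
  (intervalIntegrable_log_one_sub u v).sub intervalIntegrable_log'

lemma integral_inv_one_sub_add_log_one_sub_sub_log :
    ∫ x in (0:ℝ)..1 / 2, 1 / (1 - x) + (log (1 - x) - log x) = 2 * log 2 := by
  have hinv : IntervalIntegrable (fun x : ℝ => 1 / (1 - x)) volume 0 (1 / 2) := by
    refine ContinuousOn.intervalIntegrable (continuousOn_const.div (by fun_prop) ?_)
    intro x hx
    rw [uIcc_of_le (by norm_num)] at hx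
    linarith [hx.2]
  rw [integral_add hinv (intervalIntegrable_log_one_sub_sub_log _ _),
    integral_sub (intervalIntegrable_log_one_sub _ _) intervalIntegrable_log',
    integral_comp_sub_left (fun x => 1 / x), integral_comp_sub_left log, integral_log,
    integral_log, integral_one_div_of_pos (by norm_num) (by norm_num)]
  have hhalf : log (1 / 2 : ℝ) = -log 2 := by rw [one_div, log_inv]
  norm_num [hhalf]
  ring

theorem integral_innerIntegral : ∫ a in (0:ℝ)..1, innerIntegral a = 2 * log 2 := by
  have hhalf : (0:ℝ) ≤ 1 / 2 := by norm_num
  have hleft : IntervalIntegrable innerIntegral volume 0 (1 / 2) := by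
    have hformula : IntervalIntegrable (fun a => 1 + (1 - a) * (log (1 - a) - log a))
        volume 0 (1 / 2) :=
      intervalIntegrable_const.add
        ((intervalIntegrable_log_one_sub_sub_log _ _).continuousOn_mul (by fun_prop))
    refine hformula.congr_uIoo ?_
    rw [uIoo_of_le hhalf]
    exact fun a ha => (innerIntegral_of_le_half ha.1 ha.2.le).symm
  have hfolded : IntervalIntegrable (fun a => innerIntegral (1 - a)) volume 0 (1 / 2) := by
    have hdiv : ContinuousOn (fun a : ℝ => a / (1 - a)) (uIcc 0 (1 / 2)) := by
      refine continuousOn_id.div (by fun_prop) fun x hx => ?_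
      rw [uIcc_of_le hhalf] at hx
      linarith [hx.2]
    refine (hdiv.intervalIntegrable.add
      ((intervalIntegrable_log_one_sub_sub_log _ _).continuousOn_mul continuousOn_id)).congr_uIoo ?_
    rw [uIoo_of_le hhalf]
    exact fun a ha => (innerIntegral_one_sub_of_le_half ha.1 ha.2.le).symm
  have hright : IntervalIntegrable innerIntegral volume (1 / 2) 1 := by
    simpa only [sub_sub_cancel, sub_zero, show (1:ℝ) - 1 / 2 = 1 / 2 by norm_num]
      using (hfolded.comp_sub_left 1).symm
  have hfold : ∫ a in (1 / 2:ℝ)..1, innerIntegral a =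
      ∫ a in (0:ℝ)..1 / 2, innerIntegral (1 - a) := by
    rw [integral_comp_sub_left innerIntegral]
    norm_num
  rw [← integral_add_adjacent_intervals hleft hright, hfold, ← integral_add hleft hfolded,
    integral_congr_Ioo_of_le hhalf fun a ha => innerIntegral_add_innerIntegral_one_sub ha.1 ha.2.le]
  exact integral_inv_one_sub_add_log_one_sub_sub_log

theorem integral_C :
    ∫ a in Set.Ioc (0:ℝ) 1, ∫ b in Set.Ioc (0:ℝ) 1,
        min ((1 - a) / b) ((1 - b) / a)
      = 2 * Real.log 2 := by
  have hinner : ∀ a ∈ Ioo (0:ℝ) 1,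
      ∫ b in Ioc (0:ℝ) 1, min ((1 - a) / b) ((1 - b) / a) = innerIntegral a := fun a ha => by
    rw [← integral_of_le zero_le_one, integral_min_one_sub_div ha]
  rw [integral_Ioc_eq_integral_Ioo, setIntegral_congr_fun measurableSet_Ioo hinner,
    ← integral_Ioc_eq_integral_Ioo, ← integral_of_le zero_le_one, integral_innerIntegral]
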